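/- Let 𝒜 be an m-order n-dimensional strong M-tensor with a_{ii…i} = 1 for all i. If 0 < ω₁ < ω₂ ≤ 1, then the spectral radii of the unpreconditioned SOR iteration tensors satisfy ρ(M(𝓘 − ω₂𝓛)^{−1}(ω₂𝓕 + (1−ω₂)𝓘)) ≤ ρ(M(𝓘 − ω₁𝓛)^{−1}(ω₁𝓕 + (1−ω₁)𝓘)) < 1. -/

import Mathlib

open scoped BigOperators

namespace MultilinearPaper

noncomputable section

/-- An `m`-order `n`-dimensional real tensor: the first index is separated and
the remaining `m - 1` indices are given as a function `Fin (m-1) → Fin n`. -/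
abbrev Tensor (m n : ℕ) : Type := Fin n → (Fin (m - 1) → Fin n) → ℝ

variable {m n : ℕ}

/-- The vector `𝒜 x^{m-1}` (real version):
`(𝒜 x^{m-1})_i = ∑_{i₂,…,i_m} a_{i i₂ … i_m} x_{i₂} ⋯ x_{i_m}`. -/
def tmul (A : Tensor m n) (x : Fin n → ℝ) : Fin n → ℝ :=
  fun i => ∑ f : Fin (m - 1) → Fin n, A i f * ∏ t, x (f t)

/-- The vector `𝒜 x^{m-1}` evaluated at a complex vector. -/
def tmulC (A : Tensor m n) (x : Fin n → ℂ) : Fin n → ℂ :=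
  fun i => ∑ f : Fin (m - 1) → Fin n, (A i f : ℂ) * ∏ t, x (f t)

/-- The identity tensor `𝓘`. -/
def idT (m n : ℕ) : Tensor m n :=
  fun i f => if ∀ t, f t = i then 1 else 0

/-- Entrywise nonnegativity of a tensor. -/
def TNonneg (A : Tensor m n) : Prop := ∀ i f, 0 ≤ A i f

/-- `lam` is an eigenvalue of `A`: there is `x ≠ 0` over `ℂ` with
`𝒜 x^{m-1} = lam • x^{[m-1]}`. -/
def IsEigenvalue (A : Tensor m n) (lam : ℂ) : Prop :=
  ∃ x : Fin n → ℂ, x ≠ 0 ∧ ∀ i, tmulC A x i = lam * (x i) ^ (m - 1)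

/-- Spectral radius: supremum of moduli of eigenvalues. -/
def rho (A : Tensor m n) : ℝ :=
  sSup {r : ℝ | ∃ lam : ℂ, IsEigenvalue A lam ∧ r = ‖lam‖}

/-- `A` is a strong M-tensor: `A = η 𝓘 - B` with `B ≥ 0` and `η > ρ(B)`. -/
def StrongM (A : Tensor m n) : Prop :=
  ∃ (η : ℝ) (B : Tensor m n), TNonneg B ∧ rho B < η ∧ A = η • idT m n - B

/-- Matrix–tensor product `(P𝓑)_{j i₂…i_m} = ∑_{j₂} P_{j j₂} b_{j₂ i₂ … i_m}`. -/
def mmul (P : Matrix (Fin n) (Fin n) ℝ) (A : Tensor m n) : Tensor m n :=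
  fun j f => ∑ j₂, P j j₂ * A j₂ f

/-- Majorization matrix `M(𝒜)_{ij} = a_{i j … j}`. -/
def maj (A : Tensor m n) : Matrix (Fin n) (Fin n) ℝ :=
  fun i j => A i (fun _ => j)

/-- `a_{i i … i} = 1` for all `i`. -/
def UnitDiag (A : Tensor m n) : Prop := ∀ i, A i (fun _ => i) = 1

/-- `L`: the negatives of the strictly lower triangular entries of `M(𝒜)`. -/
def Lmat (A : Tensor m n) : Matrix (Fin n) (Fin n) ℝ :=
  fun i j => if (j : ℕ) < (i : ℕ) then -maj A i j else 0

/-- `𝓛 = L𝓘`. -/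
def Ltens (A : Tensor m n) : Tensor m n := mmul (Lmat A) (idT m n)

/-- `𝓕 = 𝓘 - 𝓛 - 𝒜`. -/
def Ftens (A : Tensor m n) : Tensor m n := idT m n - Ltens A - A

/-- The matrix `S_α^s`, with `(S_α^s)_{i,i+s} = -α_i a_{i(i+s)…(i+s)}`. -/
def Smat (A : Tensor m n) (α : Fin n → ℝ) (s : ℕ) : Matrix (Fin n) (Fin n) ℝ :=
  fun i j => if (j : ℕ) = (i : ℕ) + s then -(α i * maj A i j) else 0

/-- The matrix `K_β^k`, with `(K_β^k)_{i,i-k} = -β_i a_{i(i-k)…(i-k)}`. -/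
def Kmat (A : Tensor m n) (β : Fin n → ℝ) (k : ℕ) : Matrix (Fin n) (Fin n) ℝ :=
  fun i j => if (i : ℕ) = (j : ℕ) + k then -(β i * maj A i j) else 0

/-- The preconditioner `P_{αβ}(s,k) = I + S_α^s + K_β^k`. -/
def Pmat (A : Tensor m n) (α β : Fin n → ℝ) (s k : ℕ) : Matrix (Fin n) (Fin n) ℝ :=
  1 + Smat A α s + Kmat A β k

/-- The preconditioned tensor `𝒜_{αβ}(s,k) = P_{αβ}(s,k) 𝒜`. -/
def precond (A : Tensor m n) (α β : Fin n → ℝ) (s k : ℕ) : Tensor m n :=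
  mmul (Pmat A α β s k) A

/- Jacobi-type splittings. -/

def E1 (A : Tensor m n) (α β : Fin n → ℝ) (s k : ℕ) : Tensor m n :=
  mmul (Pmat A α β s k) (idT m n)

def F1 (A : Tensor m n) (α β : Fin n → ℝ) (s k : ℕ) : Tensor m n :=
  mmul (Pmat A α β s k) (Ltens A + Ftens A)

def F2 (A : Tensor m n) (α β : Fin n → ℝ) (s k : ℕ) : Tensor m n :=
  mmul (Pmat A α β s k) (Ltens A + Ftens A) - mmul (Smat A α s + Kmat A β k) (idT m n)

def F3 (A : Tensor m n) (α : Fin n → ℝ) (s : ℕ) : Tensor m n :=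
  mmul (1 + Smat A α s) (Ltens A + Ftens A) - mmul (Smat A α s) (idT m n)

def F4 (A : Tensor m n) (β : Fin n → ℝ) (k : ℕ) : Tensor m n :=
  mmul (1 + Kmat A β k) (Ltens A + Ftens A) - mmul (Kmat A β k) (idT m n)

/-- `S`: the matrix `S_α^1` with all parameters equal to `1`. -/
def Sfull (A : Tensor m n) : Matrix (Fin n) (Fin n) ℝ := Smat A (fun _ => 1) 1

/-- `K`: the matrix `K_β^1` with all parameters equal to `1`. -/
def Kfull (A : Tensor m n) : Matrix (Fin n) (Fin n) ℝ := Kmat A (fun _ => 1) 1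

/-- `𝓛′` with `𝓛 = K𝓘 + 𝓛′`. -/
def Lprime (A : Tensor m n) : Tensor m n := Ltens A - mmul (Kfull A) (idT m n)

/-- `𝓕′` with `𝓕 = S𝓘 + 𝓕′`. -/
def Fprime (A : Tensor m n) : Tensor m n := Ftens A - mmul (Sfull A) (idT m n)

/-- `ℰ₅ = (I - S_α K - K_β S)𝓘`. -/
def E5 (A : Tensor m n) (α β : Fin n → ℝ) : Tensor m n :=
  mmul (1 - Smat A α 1 * Kfull A - Kmat A β 1 * Sfull A) (idT m n)

/-- `ℱ₅ = 𝓛 + 𝓕 - (S_α + K_β)𝓘 + S_α(𝓛′ + 𝓕) + K_β(𝓛 + 𝓕′)`. -/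
def F5 (A : Tensor m n) (α β : Fin n → ℝ) : Tensor m n :=
  Ltens A + Ftens A - mmul (Smat A α 1 + Kmat A β 1) (idT m n)
    + mmul (Smat A α 1) (Lprime A + Ftens A) + mmul (Kmat A β 1) (Ltens A + Fprime A)

def finShiftUp (i : Fin n) (s : ℕ) (h : (i : ℕ) + s < n) : Fin n := ⟨(i : ℕ) + s, h⟩

def finShiftDown (i : Fin n) (k : ℕ) : Fin n :=
  ⟨(i : ℕ) - k, lt_of_le_of_lt (Nat.sub_le _ _) i.isLt⟩

/-- The `i`-th quantity appearing in conditions (7) and (11):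
`α_i a_{i(i+k)…(i+k)} a_{(i+k)i…i} + β_i a_{i(i-k)…(i-k)} a_{(i-k)i…i}`,
with each term dropped when its index is out of range. -/
def condExpr (A : Tensor m n) (α β : Fin n → ℝ) (k : ℕ) (i : Fin n) : ℝ :=
  (if h : (i : ℕ) + k < n then
      α i * maj A i (finShiftUp i k h) * maj A (finShiftUp i k h) i
    else 0) +
  (if k ≤ (i : ℕ) then
      β i * maj A i (finShiftDown i k) * maj A (finShiftDown i k) i
    else 0)

/-- Conditions (7) (for `k = 1`) and (11) (for general `k = s`). -/
def Cond (A : Tensor m n) (α β : Fin n → ℝ) (k : ℕ) : Prop :=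
  ∀ i : Fin n, 0 < condExpr A α β k i ∧ condExpr A α β k i < 1

/- Gauss–Seidel-type splittings. -/

/-- The diagonal part of `M(T)` as a matrix. -/
def DmatOf (T : Tensor m n) : Matrix (Fin n) (Fin n) ℝ :=
  fun i j => if i = j then maj T i j else 0

/-- The strictly lower triangular part of `M(T)` as a matrix. -/
def LmatOf (T : Tensor m n) : Matrix (Fin n) (Fin n) ℝ :=
  fun i j => if (j : ℕ) < (i : ℕ) then maj T i j else 0

/-- `𝓓_α = D_α 𝓘` from `S_α^s 𝓛 = 𝓓_α + 𝓛_α + 𝓕_α`. -/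
def Dalpha (A : Tensor m n) (α : Fin n → ℝ) (s : ℕ) : Tensor m n :=
  mmul (DmatOf (mmul (Smat A α s) (Ltens A))) (idT m n)

def Lalpha (A : Tensor m n) (α : Fin n → ℝ) (s : ℕ) : Tensor m n :=
  mmul (LmatOf (mmul (Smat A α s) (Ltens A))) (idT m n)

def Falpha (A : Tensor m n) (α : Fin n → ℝ) (s : ℕ) : Tensor m n :=
  mmul (Smat A α s) (Ltens A) - Dalpha A α s - Lalpha A α s

/-- `𝓓_β = D_β 𝓘` from `K_β^k 𝓕 = 𝓓_β + 𝓛_β + 𝓕_β`. -/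
def Dbeta (A : Tensor m n) (β : Fin n → ℝ) (k : ℕ) : Tensor m n :=
  mmul (DmatOf (mmul (Kmat A β k) (Ftens A))) (idT m n)

def Lbeta (A : Tensor m n) (β : Fin n → ℝ) (k : ℕ) : Tensor m n :=
  mmul (LmatOf (mmul (Kmat A β k) (Ftens A))) (idT m n)

def Fbeta (A : Tensor m n) (β : Fin n → ℝ) (k : ℕ) : Tensor m n :=
  mmul (Kmat A β k) (Ftens A) - Dbeta A β k - Lbeta A β k

def M1 (A : Tensor m n) (α β : Fin n → ℝ) (s k : ℕ) : Tensor m n :=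
  mmul (Pmat A α β s k) (idT m n - Ltens A)

def N1 (A : Tensor m n) (α β : Fin n → ℝ) (s k : ℕ) : Tensor m n :=
  mmul (Pmat A α β s k) (Ftens A)

def M2 (A : Tensor m n) (α β : Fin n → ℝ) (s k : ℕ) : Tensor m n :=
  idT m n - Ltens A + mmul (Kmat A β k) (idT m n) - mmul (Kmat A β k) (Ltens A)
    - Dalpha A α s - Lalpha A α s - Dbeta A β k - Lbeta A β k

def N2 (A : Tensor m n) (α β : Fin n → ℝ) (s k : ℕ) : Tensor m n :=
  Ftens A - mmul (Smat A α s) (idT m n) + mmul (Smat A α s) (Ftens A)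
    + Falpha A α s + Fbeta A β k

def M3 (A : Tensor m n) (α : Fin n → ℝ) (s : ℕ) : Tensor m n :=
  idT m n - Ltens A - Dalpha A α s - Lalpha A α s

def N3 (A : Tensor m n) (α : Fin n → ℝ) (s : ℕ) : Tensor m n :=
  Ftens A - mmul (Smat A α s) (idT m n) + mmul (Smat A α s) (Ftens A) + Falpha A α s

def M4 (A : Tensor m n) (β : Fin n → ℝ) (k : ℕ) : Tensor m n :=
  mmul (1 + Kmat A β k) (idT m n - Ltens A) - Dbeta A β k - Lbeta A β k

def N4 (A : Tensor m n) (β : Fin n → ℝ) (k : ℕ) : Tensor m n :=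
  Ftens A + Fbeta A β k

/- Preconditioned SOR. -/

def Dab (A : Tensor m n) (α β : Fin n → ℝ) (s k : ℕ) : Tensor m n :=
  idT m n - Dalpha A α s - Dbeta A β k

def Lab (A : Tensor m n) (α β : Fin n → ℝ) (s k : ℕ) : Tensor m n :=
  Ltens A - mmul (Kmat A β k) (idT m n) + mmul (Kmat A β k) (Ltens A)
    + Lalpha A α s + Lbeta A β k

def Fab (A : Tensor m n) (α β : Fin n → ℝ) (s k : ℕ) : Tensor m n :=
  Ftens A - mmul (Smat A α s) (idT m n) + mmul (Smat A α s) (Ftens A)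
    + Falpha A α s + Fbeta A β k

def Eomega (A : Tensor m n) (α β : Fin n → ℝ) (s k : ℕ) (ω : ℝ) : Tensor m n :=
  (1 / ω) • (Dab A α β s k - ω • Lab A α β s k)

def Fomega (A : Tensor m n) (α β : Fin n → ℝ) (s k : ℕ) (ω : ℝ) : Tensor m n :=
  (1 / ω) • ((1 - ω) • Dab A α β s k + ω • Fab A α β s k)

/-- Preconditioned SOR iteration tensor `ℋ_{αβ}(ω)`. -/
def Hsor (A : Tensor m n) (α β : Fin n → ℝ) (s k : ℕ) (ω : ℝ) : Tensor m n :=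
  mmul (maj (Eomega A α β s k ω))⁻¹ (Fomega A α β s k ω)

/-- Unpreconditioned SOR iteration tensor `ℋ(ω) = M(𝓘-ω𝓛)^{-1}((1-ω)𝓘+ω𝓕)`. -/
def Hu (A : Tensor m n) (ω : ℝ) : Tensor m n :=
  mmul (maj (idT m n - ω • Ltens A))⁻¹ ((1 - ω) • idT m n + ω • Ftens A)

/-- A tensor is reducible if there is a nonempty proper index subset `I` with
`a_{i₁ i₂ … i_m} = 0` whenever `i₁ ∈ I` and `i₂, …, i_m ∉ I`. -/
def TReducible (A : Tensor m n) : Prop :=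
  ∃ I : Set (Fin n), I.Nonempty ∧ I ≠ Set.univ ∧
    ∀ i f, i ∈ I → (∀ t, f t ∉ I) → A i f = 0

section Aux

lemma tmul_nonneg {B : Tensor m n} (hB : TNonneg B) {x : Fin n → ℝ}
    (hx : ∀ i, 0 ≤ x i) (i : Fin n) : 0 ≤ tmul B x i :=
  Finset.sum_nonneg fun f _ => mul_nonneg (hB i f)
    (Finset.prod_nonneg fun t _ => hx (f t))

lemma tmul_mmul (M : Matrix (Fin n) (Fin n) ℝ) (T : Tensor m n) (x : Fin n → ℝ) (i : Fin n) :
    tmul (mmul M T) x i = ∑ k, M i k * tmul T x k := by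
  simp only [tmul, mmul, Finset.sum_mul, Finset.mul_sum]
  rw [Finset.sum_comm]
  refine Finset.sum_congr rfl fun k _ => Finset.sum_congr rfl fun f _ => by ring

lemma tmulC_mmul (M : Matrix (Fin n) (Fin n) ℝ) (T : Tensor m n) (x : Fin n → ℂ) (i : Fin n) :
    tmulC (mmul M T) x i = ∑ k, (M i k : ℂ) * tmulC T x k := by
  simp only [tmulC, mmul, Finset.mul_sum]
  rw [Finset.sum_comm]
  refine Finset.sum_congr rfl fun f _ => ?_
  push_cast
  rw [Finset.sum_mul]
  exact Finset.sum_congr rfl fun k _ => by ring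

lemma idT_apply_const (hm : 2 ≤ m) (i j : Fin n) :
    idT m n i (fun _ => j) = if j = i then 1 else 0 := by
  have h : (∀ t : Fin (m - 1), j = i) ↔ j = i :=
    ⟨fun h => h ⟨0, by omega⟩, fun h _ => h⟩
  unfold idT
  exact if_congr h rfl rfl

lemma idT_nonneg (i : Fin n) (f : Fin (m-1) → Fin n) : 0 ≤ idT m n i f := by
  unfold idT; split <;> norm_num

lemma tmul_idT (hm : 2 ≤ m) (x : Fin n → ℝ) (i : Fin n) :
    tmul (idT m n) x i = x i ^ (m - 1) := by
  rw [tmul, Finset.sum_eq_single (fun _ => i)]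
  · show (if ∀ t : Fin (m-1), i = i then (1:ℝ) else 0) * _ = _
    rw [if_pos (fun _ => rfl), one_mul, Finset.prod_const, Finset.card_univ,
      Fintype.card_fin]
  · intro f _ hf
    have h : ¬ (∀ t, f t = i) := fun h => hf (funext h)
    simp [idT, h]
  · simp

lemma tmulC_idT (hm : 2 ≤ m) (x : Fin n → ℂ) (i : Fin n) :
    tmulC (idT m n) x i = x i ^ (m - 1) := by
  rw [tmulC, Finset.sum_eq_single (fun _ => i)]
  · show ((if ∀ t : Fin (m-1), i = i then (1:ℝ) else 0 : ℝ) : ℂ) * _ = _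
    rw [if_pos (fun _ => rfl)]
    push_cast
    rw [one_mul, Finset.prod_const, Finset.card_univ, Fintype.card_fin]
  · intro f _ hf
    have h : ¬ (∀ t, f t = i) := fun h => hf (funext h)
    simp [idT, h]
  · simp

lemma tmul_sub (S T : Tensor m n) (x : Fin n → ℝ) (i : Fin n) :
    tmul (S - T) x i = tmul S x i - tmul T x i := by
  simp only [tmul, Pi.sub_apply, sub_mul, Finset.sum_sub_distrib]

lemma tmul_smul_add (a b : ℝ) (S T : Tensor m n) (x : Fin n → ℝ) (i : Fin n) :
    tmul (a • S + b • T) x i = a * tmul S x i + b * tmul T x i := by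
  simp only [tmul, Pi.add_apply, Pi.smul_apply, smul_eq_mul, add_mul,
    Finset.sum_add_distrib, Finset.mul_sum, mul_assoc]

lemma tmul_smul_sub (a : ℝ) (S T : Tensor m n) (x : Fin n → ℝ) (i : Fin n) :
    tmul (a • S - T) x i = a * tmul S x i - tmul T x i := by
  simp only [tmul, Pi.sub_apply, Pi.smul_apply, smul_eq_mul, sub_mul,
    Finset.sum_sub_distrib, Finset.mul_sum, mul_assoc]

lemma tmulC_smul_add (a b : ℝ) (S T : Tensor m n) (x : Fin n → ℂ) (i : Fin n) :
    tmulC (a • S + b • T) x i = (a : ℂ) * tmulC S x i + (b : ℂ) * tmulC T x i := by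
  simp only [tmulC, Pi.add_apply, Pi.smul_apply, smul_eq_mul, Finset.mul_sum]
  rw [← Finset.sum_add_distrib]
  refine Finset.sum_congr rfl fun f _ => ?_
  push_cast
  ring

lemma tmul_smul_arg (B : Tensor m n) (c : ℝ) (x : Fin n → ℝ) (i : Fin n) :
    tmul B (fun j => c * x j) i = c ^ (m - 1) * tmul B x i := by
  simp only [tmul, Finset.mul_sum]
  refine Finset.sum_congr rfl fun f _ => ?_
  rw [Finset.prod_mul_distrib, Finset.prod_const, Finset.card_univ, Fintype.card_fin]
  ring

lemma sum_pow_eq (x : Fin n → ℝ) :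
    (∑ j, x j) ^ (m - 1) = ∑ f : Fin (m-1) → Fin n, ∏ t, x (f t) := by
  have h := Finset.prod_univ_sum (fun _ : Fin (m-1) => (Finset.univ : Finset (Fin n)))
    (fun _ j => x j)
  simpa [Finset.prod_const, Finset.card_univ] using h

lemma tmul_addConst (B : Tensor m n) (ε : ℝ) (x : Fin n → ℝ) (i : Fin n) :
    tmul (fun i f => B i f + ε) x i = tmul B x i + ε * (∑ j, x j) ^ (m - 1) := by
  simp only [tmul, add_mul, Finset.sum_add_distrib, sum_pow_eq, Finset.mul_sum]

lemma tmul_continuous (B : Tensor m n) (i : Fin n) :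
    Continuous fun x : Fin n → ℝ => tmul B x i := by
  unfold tmul
  exact continuous_finset_sum _ fun f _ =>
    continuous_const.mul (continuous_finset_prod _ fun t _ => continuous_apply (f t))

lemma tmulC_ofReal (B : Tensor m n) (x : Fin n → ℝ) (i : Fin n) :
    tmulC B (fun j => (x j : ℂ)) i = ((tmul B x i : ℝ) : ℂ) := by
  simp only [tmulC, tmul]
  push_cast
  rfl

end Aux

section Aux2

lemma abs_tmulC_le {F : Tensor m n} (hF : TNonneg F) (x : Fin n → ℂ) (i : Fin n) :
    ‖tmulC F x i‖ ≤ tmul F (fun j => ‖x j‖) i := by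
  refine (norm_sum_le _ _).trans ?_
  rw [tmul]
  refine Finset.sum_le_sum fun f _ => ?_
  rw [norm_mul, norm_prod, Complex.norm_of_nonneg (hF i f)]

lemma eigen_abs_le (hm : 2 ≤ m) (hn : 1 ≤ n) {H : Tensor m n} (hH : TNonneg H)
    {x : Fin n → ℝ} (hx : ∀ i, 0 < x i) {γ : ℝ}
    (hb : ∀ i, tmul H x i ≤ γ * x i ^ (m - 1)) {lam : ℂ}
    (hl : IsEigenvalue H lam) : ‖lam‖ ≤ γ := by
  obtain ⟨y, hy0, hyeq⟩ := hl
  have hne : (Finset.univ : Finset (Fin n)).Nonempty := ⟨⟨0, by omega⟩, Finset.mem_univ _⟩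
  obtain ⟨i, -, hi⟩ := Finset.exists_max_image Finset.univ
    (fun j => ‖y j‖ / x j) hne
  set c := ‖y i‖ / x i with hc
  have hyle : ∀ j, ‖y j‖ ≤ c * x j := fun j =>
    (div_le_iff₀ (hx j)).mp (hi j (Finset.mem_univ j))
  have hc0 : 0 < c := by
    obtain ⟨j, hj⟩ := Function.ne_iff.mp hy0
    have h1 : 0 < ‖y j‖ / x j :=
      div_pos (norm_pos_iff.mpr hj) (hx j)
    exact lt_of_lt_of_le h1 (hi j (Finset.mem_univ j))
  have hceq : c * x i = ‖y i‖ := div_mul_cancel₀ _ (ne_of_gt (hx i))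
  have hkey : ‖lam‖ * (c * x i) ^ (m-1) ≤ γ * (c * x i) ^ (m-1) := by
    rw [hceq]
    calc ‖lam‖ * ‖y i‖ ^ (m-1)
        = ‖lam * (y i) ^ (m-1)‖ := by rw [norm_mul, norm_pow]
      _ = ‖tmulC H y i‖ := by rw [hyeq i]
      _ ≤ tmul H (fun j => ‖y j‖) i := abs_tmulC_le hH y i
      _ ≤ tmul H (fun j => c * x j) i := by
          rw [tmul, tmul]
          refine Finset.sum_le_sum fun f _ => ?_
          refine mul_le_mul_of_nonneg_left ?_ (hH i f)
          exact Finset.prod_le_prod (fun t _ => norm_nonneg _)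
            (fun t _ => hyle (f t))
      _ = c ^ (m-1) * tmul H x i := tmul_smul_arg H c x i
      _ ≤ c ^ (m-1) * (γ * x i ^ (m-1)) :=
          mul_le_mul_of_nonneg_left (hb i) (by positivity)
      _ = γ * (c * x i) ^ (m-1) := by rw [mul_pow]; ring
    · rw [← hceq]
  have hpow : 0 < (c * x i) ^ (m-1) := pow_pos (mul_pos hc0 (hx i)) _
  exact le_of_mul_le_mul_right hkey hpow

lemma rho_le (hm : 2 ≤ m) (hn : 1 ≤ n) {H : Tensor m n} (hH : TNonneg H)
    {x : Fin n → ℝ} (hx : ∀ i, 0 < x i) {γ : ℝ} (hγ0 : 0 ≤ γ)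
    (hb : ∀ i, tmul H x i ≤ γ * x i ^ (m - 1)) : rho H ≤ γ := by
  refine Real.sSup_le ?_ hγ0
  rintro r ⟨lam, hl, rfl⟩
  exact eigen_abs_le hm hn hH hx hb hl

lemma bddAbove_eigenSet (hm : 2 ≤ m) (hn : 1 ≤ n) {H : Tensor m n} (hH : TNonneg H) :
    BddAbove {r : ℝ | ∃ lam : ℂ, IsEigenvalue H lam ∧ r = ‖lam‖} := by
  refine ⟨∑ i, ∑ f, H i f, ?_⟩
  rintro r ⟨lam, hl, rfl⟩
  refine eigen_abs_le hm hn hH (x := fun _ => 1) (fun i => one_pos) (fun i => ?_) hl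
  have h1 : tmul H (fun _ => 1) i = ∑ f, H i f := by
    simp [tmul]
  rw [h1, one_pow, mul_one]
  exact Finset.single_le_sum
    (fun j _ => Finset.sum_nonneg fun f _ => hH j f) (Finset.mem_univ i)

lemma rho_nonneg (H : Tensor m n) : 0 ≤ rho H :=
  Real.sSup_nonneg (by rintro r ⟨lam, _, rfl⟩; exact norm_nonneg _)

lemma isCompact_simplex :
    IsCompact {x : Fin n → ℝ | (∀ i, 0 ≤ x i) ∧ ∑ i, x i = 1} := by
  apply Metric.isCompact_of_isClosed_isBounded
  · have h1 : IsClosed {x : Fin n → ℝ | ∀ i, 0 ≤ x i} := by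
      rw [Set.setOf_forall]
      exact isClosed_iInter fun i => isClosed_le continuous_const (continuous_apply i)
    have h2 : IsClosed {x : Fin n → ℝ | ∑ i, x i = 1} :=
      isClosed_eq (continuous_finset_sum _ fun i _ => continuous_apply i) continuous_const
    exact (Set.setOf_and ▸ h1.inter h2 :)
  · refine Metric.isBounded_closedBall (x := (0 : Fin n → ℝ)) (r := 1) |>.subset ?_
    rintro x ⟨hx0, hx1⟩
    rw [Metric.mem_closedBall, dist_zero_right]
    refine (pi_norm_le_iff_of_nonneg zero_le_one).mpr fun i => ?_
    rw [Real.norm_eq_abs, abs_of_nonneg (hx0 i)]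
    calc x i ≤ ∑ j, x j := Finset.single_le_sum (fun j _ => hx0 j) (Finset.mem_univ i)
      _ = 1 := hx1

end Aux2

section Aux3

lemma posEigen (hm : 2 ≤ m) (hn : 1 ≤ n) (B : Tensor m n) (hB : TNonneg B)
    {ε : ℝ} (hε : 0 < ε) {M : ℝ} (hM : ∀ i, ∑ f, (B i f + ε) ≤ M) :
    ∃ (lam : ℝ) (x : Fin n → ℝ), (∀ i, 0 ≤ x i) ∧ (∑ i, x i = 1) ∧ 0 ≤ lam ∧ lam ≤ M ∧
      (∀ i, tmul (fun i f => B i f + ε) x i = lam * x i ^ (m - 1)) ∧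
      (∀ s (z : Fin n → ℝ), (∀ i, 0 ≤ z i) → (∑ i, z i = 1) →
        (∀ i, s * z i ^ (m - 1) ≤ tmul (fun i f => B i f + ε) z i) → s ≤ lam) := by
  set Bε : Tensor m n := fun i f => B i f + ε with hBεdef
  have hBε : TNonneg Bε := fun i f => by
    have := hB i f; simp only [hBεdef]; linarith
  have hBεlow : ∀ i f, ε ≤ Bε i f := fun i f => by
    have := hB i f; simp only [hBεdef]; linarith
  have hp0 : m - 1 ≠ 0 := by omega
  have hi0 : (0 : ℕ) < n := hn
  have hM0 : 0 ≤ M := by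
    refine le_trans ?_ (hM ⟨0, hi0⟩)
    exact Finset.sum_nonneg fun f _ => hBε _ f
  -- the bound sub-lemma
  have hbound : ∀ (s : ℝ) (z : Fin n → ℝ), (∀ i, 0 ≤ z i) → (∑ i, z i = 1) →
      (∀ i, s * z i ^ (m - 1) ≤ tmul Bε z i) → s ≤ M := by
    intro s z hz hz1 hcon
    have hne : (Finset.univ : Finset (Fin n)).Nonempty := ⟨⟨0, hi0⟩, Finset.mem_univ _⟩
    obtain ⟨i, -, hi⟩ := Finset.exists_max_image Finset.univ z hne
    have hzi : 0 < z i := by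
      by_contra h
      push_neg at h
      have hall : ∀ j, z j = 0 := fun j =>
        le_antisymm (le_trans (hi j (Finset.mem_univ j)) h) (hz j)
      rw [Finset.sum_congr rfl fun j _ => hall j] at hz1
      simp at hz1
    have h2 : tmul Bε z i ≤ (∑ f, Bε i f) * z i ^ (m-1) := by
      rw [tmul, Finset.sum_mul]
      refine Finset.sum_le_sum fun f _ => ?_
      refine mul_le_mul_of_nonneg_left ?_ (hBε i f)
      calc ∏ t, z (f t) ≤ ∏ _t : Fin (m-1), z i :=
            Finset.prod_le_prod (fun t _ => hz (f t)) (fun t _ => hi (f t) (Finset.mem_univ _))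
        _ = z i ^ (m-1) := by rw [Finset.prod_const, Finset.card_univ, Fintype.card_fin]
    have h3 : s * z i ^ (m-1) ≤ (∑ f, Bε i f) * z i ^ (m-1) := le_trans (hcon i) h2
    have h4 : s ≤ ∑ f, Bε i f := le_of_mul_le_mul_right h3 (pow_pos hzi _)
    exact le_trans h4 (hM i)
  -- the feasible set
  set Δ : Set (Fin n → ℝ) := {x | (∀ i, 0 ≤ x i) ∧ ∑ i, x i = 1} with hΔdef
  set K : Set (ℝ × (Fin n → ℝ)) :=
    (Set.Icc 0 M ×ˢ Δ) ∩ ⋂ i, {q | q.1 * q.2 i ^ (m-1) ≤ tmul Bε q.2 i} with hKdef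
  have hKmem : ∀ q : ℝ × (Fin n → ℝ), q ∈ K ↔
      (0 ≤ q.1 ∧ q.1 ≤ M) ∧ ((∀ i, 0 ≤ q.2 i) ∧ ∑ i, q.2 i = 1) ∧
      ∀ i, q.1 * q.2 i ^ (m-1) ≤ tmul Bε q.2 i := by
    intro q
    simp only [hKdef, Set.mem_inter_iff, Set.mem_prod, Set.mem_Icc, hΔdef,
      Set.mem_setOf_eq, Set.mem_iInter]
    tauto
  have hKne : K.Nonempty := by
    refine ⟨(0, fun _ => (n : ℝ)⁻¹), (hKmem _).mpr ⟨⟨le_refl _, hM0⟩, ⟨?_, ?_⟩, ?_⟩⟩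
    · intro i; positivity
    · rw [Finset.sum_const, Finset.card_univ, Fintype.card_fin, nsmul_eq_mul]
      field_simp
    · intro i
      simpa using tmul_nonneg hBε (fun i => by positivity) i
  have hKcomp : IsCompact K := by
    refine (isCompact_Icc.prod isCompact_simplex).inter_right ?_
    refine isClosed_iInter fun i => isClosed_le ?_ ?_
    · exact (continuous_fst.mul (((continuous_apply i).comp continuous_snd).pow _))
    · exact (tmul_continuous Bε i).comp continuous_snd
  obtain ⟨⟨lam, x⟩, hqK, hqmax⟩ := hKcomp.exists_isMaxOn hKne continuous_fst.continuousOn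
  obtain ⟨⟨hlam0, hlamM⟩, ⟨hx0, hx1⟩, hconstr⟩ := (hKmem _).mp hqK
  dsimp only at hlam0 hlamM hconstr hx0 hx1
  have hmax' : ∀ q ∈ K, q.1 ≤ lam := fun q hq => hqmax hq
  -- eigen equality by perturbation
  have heig : ∀ i, tmul Bε x i = lam * x i ^ (m - 1) := by
    by_contra hne
    push_neg at hne
    obtain ⟨k, hk⟩ := hne
    have hklt : lam * x k ^ (m-1) < tmul Bε x k := (hconstr k).lt_of_ne fun h => hk h.symm
    set g : ℝ := tmul Bε x k - lam * x k ^ (m-1) with hgdef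
    have hg : 0 < g := by simp only [hgdef]; linarith
    -- choose δ
    have hcont : Filter.Tendsto (fun δ : ℝ => lam * ((x k + δ) ^ (m-1) - x k ^ (m-1)))
        (nhds 0) (nhds 0) := by
      have hc : Continuous fun δ : ℝ => lam * ((x k + δ) ^ (m-1) - x k ^ (m-1)) :=
        continuous_const.mul (((continuous_const.add continuous_id).pow (m-1)).sub
          continuous_const)
      have h0 : lam * ((x k + 0) ^ (m-1) - x k ^ (m-1)) = 0 := by simp
      simpa [h0] using hc.tendsto 0
    have hev : ∀ᶠ δ in nhdsWithin 0 (Set.Ioi 0),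
        lam * ((x k + δ) ^ (m-1) - x k ^ (m-1)) < g/2 :=
      (hcont.mono_left nhdsWithin_le_nhds).eventually (gt_mem_nhds (by linarith))
    obtain ⟨δ, hδg, hδpos⟩ := (hev.and self_mem_nhdsWithin).exists
    set Qp : ℝ := (x k + δ) ^ (m-1) with hQpdef
    have hQp : 0 < Qp := pow_pos (by have := hx0 k; linarith) _
    set ρ : ℝ := min (ε * δ ^ (m-1)) (g / (2 * Qp)) with hρdef
    have hρ : 0 < ρ := lt_min (by positivity) (by positivity)
    set x' : Fin n → ℝ := fun i => if i = k then x k + δ else x i with hx'def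
    have hx'ge : ∀ i, x i ≤ x' i := by
      intro i; simp only [hx'def]
      split
      · rename_i h; rw [h]; linarith
      · exact le_refl _
    have hx'0 : ∀ i, 0 ≤ x' i := fun i => le_trans (hx0 i) (hx'ge i)
    have hx'k : x' k = x k + δ := by simp [hx'def]
    have hsum' : ∑ i, x' i = 1 + δ := by
      have h : ∀ i, x' i = x i + (if i = k then δ else 0) := by
        intro i
        by_cases hik : i = k
        · subst hik; rw [if_pos rfl, hx'k]
        · rw [if_neg hik]
          simp only [hx'def, if_neg hik, add_zero]
      rw [Finset.sum_congr rfl fun i _ => h i, Finset.sum_add_distrib, hx1,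
        Finset.sum_ite_eq' Finset.univ k (fun _ => δ), if_pos (Finset.mem_univ k)]
    have hgain : ∀ i, tmul Bε x i + ε * δ ^ (m-1) ≤ tmul Bε x' i := by
      intro i
      have hdiff : tmul Bε x' i - tmul Bε x i
          = ∑ f, Bε i f * (∏ t, x' (f t) - ∏ t, x (f t)) := by
        rw [tmul, tmul, ← Finset.sum_sub_distrib]
        exact Finset.sum_congr rfl fun f _ => by ring
      have hterm : ∀ f : Fin (m-1) → Fin n,
          0 ≤ Bε i f * (∏ t, x' (f t) - ∏ t, x (f t)) := fun f =>
        mul_nonneg (hBε i f) (sub_nonneg.mpr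
          (Finset.prod_le_prod (fun t _ => hx0 (f t)) (fun t _ => hx'ge (f t))))
      have hprodk : ∏ t : Fin (m-1), x' ((fun _ => k) t) = (x k + δ) ^ (m-1) := by
        rw [Finset.prod_const, Finset.card_univ, Fintype.card_fin, hx'k]
      have hprodk' : ∏ t : Fin (m-1), x ((fun _ => k) t) = x k ^ (m-1) := by
        rw [Finset.prod_const, Finset.card_univ, Fintype.card_fin]
      have hsingle : ε * δ ^ (m-1) ≤ Bε i (fun _ => k) *
          (∏ t : Fin (m-1), x' ((fun _ => k) t) - ∏ t : Fin (m-1), x ((fun _ => k) t)) := by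
        rw [hprodk, hprodk']
        have hps : x k ^ (m-1) + δ ^ (m-1) ≤ (x k + δ) ^ (m-1) :=
          pow_add_pow_le (hx0 k) (le_of_lt hδpos) hp0
        have h1 : δ ^ (m-1) ≤ (x k + δ) ^ (m-1) - x k ^ (m-1) := by linarith
        exact mul_le_mul (hBεlow i _) h1 (by positivity) (hBε i _)
      have hsum : ε * δ ^ (m-1) ≤ ∑ f, Bε i f * (∏ t, x' (f t) - ∏ t, x (f t)) :=
        le_trans hsingle (Finset.single_le_sum (fun f _ => hterm f)
          (Finset.mem_univ (fun _ => k)))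
      linarith [hdiff ▸ hsum]
    -- feasibility of the perturbed pair
    have hconstr' : ∀ i, (lam + ρ) * x' i ^ (m-1) ≤ tmul Bε x' i := by
      intro i
      by_cases hik : i = k
      · subst hik
        rw [hx'k]
        have h1 : lam * (x i + δ) ^ (m-1) ≤ lam * x i ^ (m-1) + g/2 := by
          have := hδg; simp only [hQpdef] at *; linarith
        have h2 : ρ * (x i + δ) ^ (m-1) ≤ g/2 := by
          have hle : ρ ≤ g / (2 * Qp) := min_le_right _ _
          have := mul_le_mul_of_nonneg_right hle (le_of_lt hQp)
          have heq : g / (2 * Qp) * Qp = g / 2 := by field_simp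
          rw [heq] at this
          simpa [hQpdef] using this
        have h3 : tmul Bε x i ≤ tmul Bε x' i := by
          have := hgain i
          have h4 : 0 ≤ ε * δ ^ (m-1) := by positivity
          linarith
        have hgeq : tmul Bε x i = lam * x i ^ (m-1) + g := by simp only [hgdef]; ring
        calc (lam + ρ) * (x i + δ) ^ (m-1)
            = lam * (x i + δ) ^ (m-1) + ρ * (x i + δ) ^ (m-1) := by ring
          _ ≤ (lam * x i ^ (m-1) + g/2) + g/2 := add_le_add h1 h2
          _ = lam * x i ^ (m-1) + g := by ring
          _ = tmul Bε x i := hgeq.symm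
          _ ≤ tmul Bε x' i := h3
      · have hx'i : x' i = x i := by simp [hx'def, hik]
        rw [hx'i]
        have hxi1 : x i ≤ 1 := by
          rw [← hx1]
          exact Finset.single_le_sum (fun j _ => hx0 j) (Finset.mem_univ i)
        have hxp1 : x i ^ (m-1) ≤ 1 := pow_le_one₀ (hx0 i) hxi1
        have h1 : ρ * x i ^ (m-1) ≤ ε * δ ^ (m-1) :=
          le_trans (mul_le_of_le_one_right (le_of_lt hρ) hxp1) (min_le_left _ _)
        calc (lam + ρ) * x i ^ (m-1) = lam * x i ^ (m-1) + ρ * x i ^ (m-1) := by ring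
          _ ≤ tmul Bε x i + ε * δ ^ (m-1) := add_le_add (hconstr i) h1
          _ ≤ tmul Bε x' i := hgain i
    -- normalize
    set c : ℝ := (1 + δ)⁻¹ with hcdef
    have hc : 0 < c := by positivity
    set x'' : Fin n → ℝ := fun i => c * x' i with hx''def
    have hx''0 : ∀ i, 0 ≤ x'' i := fun i => mul_nonneg (le_of_lt hc) (hx'0 i)
    have hx''1 : ∑ i, x'' i = 1 := by
      simp only [hx''def]
      rw [← Finset.mul_sum, hsum', hcdef]
      field_simp
    have hconstr'' : ∀ i, (lam + ρ) * x'' i ^ (m-1) ≤ tmul Bε x'' i := by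
      intro i
      have heq1 : tmul Bε x'' i = c ^ (m-1) * tmul Bε x' i := tmul_smul_arg Bε c x' i
      have heq2 : x'' i ^ (m-1) = c ^ (m-1) * x' i ^ (m-1) := by
        simp only [hx''def]; rw [mul_pow]
      rw [heq1, heq2]
      calc (lam + ρ) * (c ^ (m-1) * x' i ^ (m-1))
          = c ^ (m-1) * ((lam + ρ) * x' i ^ (m-1)) := by ring
        _ ≤ c ^ (m-1) * tmul Bε x' i :=
            mul_le_mul_of_nonneg_left (hconstr' i) (by positivity)
    have hmemK : (lam + ρ, x'') ∈ K := by
      refine (hKmem _).mpr ⟨⟨show (0:ℝ) ≤ lam + ρ by linarith, ?_⟩, ⟨hx''0, hx''1⟩, hconstr''⟩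
      exact hbound (lam + ρ) x'' hx''0 hx''1 hconstr''
    have := hmax' _ hmemK
    dsimp only at this
    linarith
  refine ⟨lam, x, hx0, hx1, hlam0, hlamM, heig, ?_⟩
  intro s z hz0 hz1 hzc
  rcases le_or_gt s 0 with hs | hs
  · linarith
  · refine hmax' (s, z) ((hKmem _).mpr ⟨⟨le_of_lt hs, ?_⟩, ⟨hz0, hz1⟩, hzc⟩)
    exact hbound s z hz0 hz1 hzc

end Aux3

section Aux4

open Filter Topology

lemma limitEigen (hm : 2 ≤ m) (hn : 1 ≤ n) (B : Tensor m n) (hB : TNonneg B)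
    (t M : ℝ) (ht : 0 ≤ t)
    (hseq : ∀ k : ℕ, ∃ (lam : ℝ) (x : Fin n → ℝ), (∀ i, 0 ≤ x i) ∧ (∑ i, x i = 1) ∧
      t ≤ lam ∧ lam ≤ M ∧
      ∀ i, tmul B x i + (1/((k:ℝ)+1)) * (∑ j, x j) ^ (m-1) = lam * x i ^ (m-1)) :
    t ≤ rho B := by
  choose lam x h0 h1 h2 h3 h4 using hseq
  set C : Set (ℝ × (Fin n → ℝ)) :=
    Set.Icc t M ×ˢ {z | (∀ i, 0 ≤ z i) ∧ ∑ i, z i = 1} with hCdef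
  have hCcomp : IsCompact C := isCompact_Icc.prod isCompact_simplex
  have hmem : ∀ k : ℕ, (lam k, x k) ∈ C := fun k =>
    ⟨⟨h2 k, h3 k⟩, h0 k, h1 k⟩
  obtain ⟨q, hqC, φ, hφmono, hφtend⟩ := hCcomp.tendsto_subseq hmem
  obtain ⟨⟨hqt, hqM⟩, hq0, hq1⟩ := hqC
  have hxs : Tendsto (fun k => x (φ k)) atTop (𝓝 q.2) :=
    (continuous_snd.tendsto q).comp hφtend
  have hlams : Tendsto (fun k => lam (φ k)) atTop (𝓝 q.1) :=
    (continuous_fst.tendsto q).comp hφtend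
  have hεs : Tendsto (fun k => 1/((φ k : ℝ)+1)) atTop (𝓝 0) :=
    tendsto_one_div_add_atTop_nhds_zero_nat.comp hφmono.tendsto_atTop
  have heigq : ∀ i, tmul B q.2 i = q.1 * q.2 i ^ (m-1) := by
    intro i
    have hL : Tendsto (fun k => tmul B (x (φ k)) i + 1/((φ k : ℝ)+1))
        atTop (𝓝 (tmul B q.2 i + 0)) :=
      (((tmul_continuous B i).tendsto q.2).comp hxs).add hεs
    have hR : Tendsto (fun k => lam (φ k) * x (φ k) i ^ (m-1))
        atTop (𝓝 (q.1 * q.2 i ^ (m-1))) :=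
      hlams.mul ((((continuous_apply i).tendsto q.2).comp hxs).pow _)
    have hEq : (fun k => tmul B (x (φ k)) i + 1/((φ k : ℝ)+1))
        = fun k => lam (φ k) * x (φ k) i ^ (m-1) := by
      funext k
      have := h4 (φ k) i
      rw [h1 (φ k), one_pow, mul_one] at this
      exact this
    rw [hEq] at hL
    have := tendsto_nhds_unique hL hR
    linarith
  have hq2ne : (fun i => (q.2 i : ℂ)) ≠ 0 := by
    intro hcon
    have hz : q.2 = 0 := by
      funext i
      have h := congrFun hcon i
      rw [Pi.zero_apply] at h
      exact_mod_cast h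
    rw [hz] at hq1
    simp at hq1
  have hEig : IsEigenvalue B (q.1 : ℂ) := by
    refine ⟨fun i => (q.2 i : ℂ), hq2ne, fun i => ?_⟩
    rw [tmulC_ofReal, heigq i]
    push_cast
    ring
  have hq10 : 0 ≤ q.1 := le_trans ht hqt
  calc t ≤ q.1 := hqt
    _ ≤ rho B := le_csSup (bddAbove_eigenSet hm hn hB)
        ⟨(q.1 : ℂ), hEig, by rw [Complex.norm_of_nonneg hq10]⟩

lemma uniformM (B : Tensor m n) (hB : TNonneg B) :
    ∀ i, ∀ ε : ℝ, 0 < ε → ε ≤ 1 →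
      ∑ f, (B i f + ε) ≤ (∑ i, ∑ f, B i f) + (Fintype.card (Fin (m-1) → Fin n) : ℝ) := by
  intro i ε hε hε1
  rw [Finset.sum_add_distrib, Finset.sum_const, Finset.card_univ, nsmul_eq_mul]
  have h1 : ∑ f, B i f ≤ ∑ i, ∑ f, B i f :=
    Finset.single_le_sum (fun j _ => Finset.sum_nonneg fun f _ => hB j f)
      (Finset.mem_univ i)
  have h2 : (Fintype.card (Fin (m-1) → Fin n) : ℝ) * ε
      ≤ (Fintype.card (Fin (m-1) → Fin n) : ℝ) :=
    mul_le_of_le_one_right (by positivity) hε1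
  linarith

lemma rho_ge_of_subinv (hm : 2 ≤ m) (hn : 1 ≤ n) (B : Tensor m n) (hB : TNonneg B)
    {v : Fin n → ℝ} (hv0 : ∀ i, 0 ≤ v i) (hvne : ∃ i, 0 < v i) {t : ℝ} (ht : 0 ≤ t)
    (hsub : ∀ i, t * v i ^ (m-1) ≤ tmul B v i) : t ≤ rho B := by
  set M : ℝ := (∑ i, ∑ f, B i f) + (Fintype.card (Fin (m-1) → Fin n) : ℝ) with hMdef
  have hS : 0 < ∑ i, v i := Finset.sum_pos' (fun i _ => hv0 i)
    ⟨hvne.choose, Finset.mem_univ _, hvne.choose_spec⟩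
  set z : Fin n → ℝ := fun i => (∑ j, v j)⁻¹ * v i with hzdef
  have hz0 : ∀ i, 0 ≤ z i := fun i => mul_nonneg (by positivity) (hv0 i)
  have hz1 : ∑ i, z i = 1 := by
    simp only [hzdef]
    rw [← Finset.mul_sum]
    field_simp
  refine limitEigen hm hn B hB t M ht (fun k => ?_)
  have hε : (0:ℝ) < 1/((k:ℝ)+1) := by positivity
  have hε1 : (1:ℝ)/((k:ℝ)+1) ≤ 1 := by
    rw [div_le_one (by positivity)]
    simp
  obtain ⟨lamk, xk, hk0, hk1, hk2, hk3, hk4, hk5⟩ :=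
    posEigen hm hn B hB hε (fun i => uniformM B hB i _ hε hε1)
  refine ⟨lamk, xk, hk0, hk1, ?_, hk3, fun i => ?_⟩
  · -- t ≤ lamk via maximality with witness z
    refine hk5 t z hz0 hz1 fun i => ?_
    rw [tmul_addConst]
    have hzv : tmul B z i = ((∑ j, v j)⁻¹) ^ (m-1) * tmul B v i := tmul_smul_arg B _ v i
    have h1 : t * z i ^ (m-1) ≤ tmul B z i := by
      rw [hzv]
      have : z i ^ (m-1) = ((∑ j, v j)⁻¹) ^ (m-1) * v i ^ (m-1) := by
        simp only [hzdef]; rw [mul_pow]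
      rw [this]
      calc t * (((∑ j, v j)⁻¹) ^ (m-1) * v i ^ (m-1))
          = ((∑ j, v j)⁻¹) ^ (m-1) * (t * v i ^ (m-1)) := by ring
        _ ≤ ((∑ j, v j)⁻¹) ^ (m-1) * tmul B v i :=
            mul_le_mul_of_nonneg_left (hsub i) (by positivity)
    have h2 : 0 ≤ 1/((k:ℝ)+1) * (∑ j, z j) ^ (m-1) := by positivity
    linarith
  · -- the eigen equation in expanded form
    have := hk4 i
    rw [tmul_addConst] at this
    exact this

lemma semipos (hm : 2 ≤ m) (hn : 1 ≤ n) (B : Tensor m n) (hB : TNonneg B) {η : ℝ}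
    (hρ : rho B < η) :
    ∃ w : Fin n → ℝ, (∀ i, 0 < w i) ∧ ∀ i, tmul B w i < η * w i ^ (m-1) := by
  have hη0 : 0 < η := lt_of_le_of_lt (rho_nonneg B) hρ
  have hp0 : m - 1 ≠ 0 := by omega
  have hchoice : ∀ k : ℕ, ∃ (lam : ℝ) (x : Fin n → ℝ),
      (∀ i, 0 ≤ x i) ∧ (∑ i, x i = 1) ∧ 0 ≤ lam ∧
      lam ≤ (∑ i, ∑ f, B i f) + (Fintype.card (Fin (m-1) → Fin n) : ℝ) ∧
      (∀ i, tmul (fun i f => B i f + 1/((k:ℝ)+1)) x i = lam * x i ^ (m - 1)) := by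
    intro k
    have hε : (0:ℝ) < 1/((k:ℝ)+1) := by positivity
    have hε1 : (1:ℝ)/((k:ℝ)+1) ≤ 1 := by
      rw [div_le_one (by positivity)]; simp
    obtain ⟨lamk, xk, hk0, hk1, hk2, hk3, hk4, hk5⟩ :=
      posEigen hm hn B hB hε (fun i => uniformM B hB i _ hε hε1)
    exact ⟨lamk, xk, hk0, hk1, hk2, hk3, hk4⟩
  choose lam x h0 h1 h2 h3 h4 using hchoice
  by_cases hall : ∀ k : ℕ, η < lam k
  · exfalso
    have : η ≤ rho B := by
      refine limitEigen hm hn B hB η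
        ((∑ i, ∑ f, B i f) + (Fintype.card (Fin (m-1) → Fin n) : ℝ))
        (le_of_lt hη0) (fun k => ?_)
      refine ⟨lam k, x k, h0 k, h1 k, le_of_lt (hall k), h3 k, fun i => ?_⟩
      have := h4 k i
      rw [tmul_addConst] at this
      exact this
    linarith
  · push_neg at hall
    obtain ⟨k, hk⟩ := hall
    set ε : ℝ := 1/((k:ℝ)+1) with hεdef
    have hε : (0:ℝ) < ε := by positivity
    refine ⟨x k, ?_, ?_⟩
    · -- positivity of all entries
      intro i
      have heq := h4 k i
      rw [tmul_addConst, h1 k, one_pow, mul_one] at heq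
      have hge : 0 ≤ tmul B (x k) i := tmul_nonneg hB (h0 k) i
      have hpos : 0 < lam k * x k i ^ (m-1) := by
        rw [← heq]; linarith
      have hxp : 0 < x k i ^ (m-1) := by
        rcases (h0 k i).eq_or_lt with h | h
        · exfalso
          rw [← h, zero_pow hp0, mul_zero] at hpos
          exact lt_irrefl 0 hpos
        · exact pow_pos h _
      rcases (h0 k i).eq_or_lt with h | h
      · exfalso; rw [← h, zero_pow hp0] at hxp; exact lt_irrefl 0 hxp
      · exact h
    · intro i
      have heq := h4 k i
      rw [tmul_addConst, h1 k, one_pow, mul_one] at heq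
      have h5 : lam k * x k i ^ (m-1) ≤ η * x k i ^ (m-1) :=
        mul_le_mul_of_nonneg_right hk (pow_nonneg (h0 k i) _)
      linarith

end Aux4


section Aux5

lemma matpow_nonneg {N : Matrix (Fin n) (Fin n) ℝ} (hN : ∀ i j, 0 ≤ N i j) :
    ∀ k, ∀ i j, 0 ≤ (N ^ k) i j := by
  intro k
  induction k with
  | zero =>
    intro i j
    rw [pow_zero, Matrix.one_apply]
    split <;> norm_num
  | succ k ih =>
    intro i j
    rw [pow_succ, Matrix.mul_apply]
    exact Finset.sum_nonneg fun l _ => mul_nonneg (ih i l) (hN l j)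

lemma strictLower_pow (N : Matrix (Fin n) (Fin n) ℝ)
    (hN : ∀ i j : Fin n, (i:ℕ) ≤ (j:ℕ) → N i j = 0) :
    ∀ k, ∀ i j : Fin n, (i:ℕ) < (j:ℕ) + k → (N ^ k) i j = 0 := by
  intro k
  induction k with
  | zero =>
    intro i j h
    rw [pow_zero, Matrix.one_apply_ne]
    intro he
    rw [he] at h
    omega
  | succ k ih =>
    intro i j h
    rw [pow_succ', Matrix.mul_apply]
    refine Finset.sum_eq_zero fun l _ => ?_
    rcases le_or_gt (i:ℕ) (l:ℕ) with hle | hlt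
    · rw [hN i l hle, zero_mul]
    · rw [ih l j (by omega), mul_zero]

lemma strictLower_pow_n (N : Matrix (Fin n) (Fin n) ℝ)
    (hN : ∀ i j : Fin n, (i:ℕ) ≤ (j:ℕ) → N i j = 0) : N ^ n = 0 := by
  ext i j
  rw [strictLower_pow N hN n i j (by omega), Matrix.zero_apply]

lemma geom_inverse (N : Matrix (Fin n) (Fin n) ℝ) (hNn : N ^ n = 0) :
    (1 - N) * (∑ k ∈ Finset.range n, N ^ k) = 1 ∧
    (∑ k ∈ Finset.range n, N ^ k) * (1 - N) = 1 := by
  have h1 : (∑ k ∈ Finset.range n, N ^ k) * (N - 1) = N ^ n - 1 := geom_sum_mul N n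
  have hcomm : N * (∑ k ∈ Finset.range n, N ^ k) = (∑ k ∈ Finset.range n, N ^ k) * N := by
    rw [Finset.mul_sum, Finset.sum_mul]
    exact Finset.sum_congr rfl fun k _ => ((pow_succ' N k).symm.trans (pow_succ N k))
  have h2 : (∑ k ∈ Finset.range n, N ^ k) * (1 - N) = 1 := by
    have : (∑ k ∈ Finset.range n, N ^ k) * (1 - N)
        = -((∑ k ∈ Finset.range n, N ^ k) * (N - 1)) := by noncomm_ring
    rw [this, h1, hNn]
    noncomm_ring
  refine ⟨?_, h2⟩
  calc (1 - N) * (∑ k ∈ Finset.range n, N ^ k)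
      = (∑ k ∈ Finset.range n, N ^ k) - N * (∑ k ∈ Finset.range n, N ^ k) := by noncomm_ring
    _ = (∑ k ∈ Finset.range n, N ^ k) - (∑ k ∈ Finset.range n, N ^ k) * N := by rw [hcomm]
    _ = (∑ k ∈ Finset.range n, N ^ k) * (1 - N) := by noncomm_ring
    _ = 1 := h2

lemma Ltens_apply_const (hm : 2 ≤ m) (A : Tensor m n) (i j : Fin n) :
    Ltens A i (fun _ => j) = Lmat A i j := by
  rw [Ltens, mmul]
  rw [Finset.sum_eq_single j]
  · rw [idT_apply_const hm, if_pos rfl, mul_one]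
  · intro b _ hb
    rw [idT_apply_const hm, if_neg (fun h => hb h.symm), mul_zero]
  · simp

lemma Ltens_apply_nonconst (A : Tensor m n) (f : Fin (m-1) → Fin n)
    (hf : ¬ ∃ j, ∀ t, f t = j) (i : Fin n) : Ltens A i f = 0 := by
  rw [Ltens, mmul]
  refine Finset.sum_eq_zero fun j _ => ?_
  have : idT m n j f = 0 := by
    unfold idT
    rw [if_neg (fun hall => hf ⟨j, hall⟩)]
  rw [this, mul_zero]

lemma idT_apply_nonconst (f : Fin (m-1) → Fin n)
    (hf : ¬ ∃ j, ∀ t, f t = j) (i : Fin n) : idT m n i f = 0 := by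
  unfold idT
  rw [if_neg (fun hall => hf ⟨i, hall⟩)]

lemma Lmat_nonneg (hm : 2 ≤ m) {A B : Tensor m n} {η : ℝ} (hB : TNonneg B)
    (hAeq : A = η • idT m n - B) (i j : Fin n) : 0 ≤ Lmat A i j := by
  unfold Lmat
  split
  · rename_i hij
    have hne : j ≠ i := fun h => by rw [h] at hij; omega
    rw [hAeq]
    unfold maj
    simp only [Pi.sub_apply, Pi.smul_apply, smul_eq_mul]
    rw [idT_apply_const hm, if_neg hne]
    have := hB i (fun _ => j)
    linarith
  · exact le_refl 0

lemma Ftens_nonneg (hm : 2 ≤ m) {A B : Tensor m n} {η : ℝ} (hB : TNonneg B)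
    (hAeq : A = η • idT m n - B) (hdiag : UnitDiag A) : TNonneg (Ftens A) := by
  intro i f
  have hApp : Ftens A i f = idT m n i f - Ltens A i f - A i f := rfl
  by_cases hc : ∃ j, ∀ t, f t = j
  · obtain ⟨j, hj⟩ := hc
    have hf : f = fun _ => j := funext hj
    subst hf
    rw [hApp, idT_apply_const hm, Ltens_apply_const hm]
    rcases lt_trichotomy (j:ℕ) (i:ℕ) with h | h | h
    · have hne : j ≠ i := fun he => by rw [he] at h; omega
      rw [if_neg hne]
      unfold Lmat
      rw [if_pos h]
      unfold maj
      linarith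
    · have he : j = i := Fin.ext h
      subst he
      rw [if_pos rfl]
      unfold Lmat
      rw [if_neg (by omega)]
      have := hdiag j
      linarith
    · have hne : j ≠ i := fun he => by rw [he] at h; omega
      rw [if_neg hne]
      unfold Lmat
      rw [if_neg (by omega)]
      have hAv : A i (fun _ => j) = η * idT m n i (fun _ => j) - B i (fun _ => j) := by
        rw [hAeq]; simp [Pi.sub_apply, Pi.smul_apply, smul_eq_mul]
      rw [hAv, idT_apply_const hm, if_neg hne]
      have := hB i (fun _ => j)
      linarith
  · rw [hApp, idT_apply_nonconst f hc, Ltens_apply_nonconst A f hc]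
    have hAv : A i f = η * idT m n i f - B i f := by
      rw [hAeq]; simp [Pi.sub_apply, Pi.smul_apply, smul_eq_mul]
    rw [hAv, idT_apply_nonconst f hc]
    have := hB i f
    linarith

lemma maj_denom (hm : 2 ≤ m) (A : Tensor m n) (ω : ℝ) :
    maj (idT m n - ω • Ltens A) = 1 - ω • Lmat A := by
  ext i j
  have h1 : maj (idT m n - ω • Ltens A) i j
      = idT m n i (fun _ => j) - ω * Ltens A i (fun _ => j) := by
    unfold maj
    simp [Pi.sub_apply, Pi.smul_apply, smul_eq_mul]
  rw [h1, idT_apply_const hm, Ltens_apply_const hm]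
  simp only [Matrix.sub_apply, Matrix.smul_apply, Matrix.one_apply, smul_eq_mul]
  rcases eq_or_ne i j with h | h
  · rw [if_pos h.symm, if_pos h]
  · rw [if_neg (Ne.symm h), if_neg h]

end Aux5

set_option maxHeartbeats 1000000 in
theorem stmt19 {m n : ℕ} (hm : 2 ≤ m) (hn : 1 ≤ n)
    (A : Tensor m n) (hA : StrongM A) (hdiag : UnitDiag A)
    (ω₁ ω₂ : ℝ) (hω1 : 0 < ω₁) (hω12 : ω₁ < ω₂) (hω2 : ω₂ ≤ 1) :
    rho (Hu A ω₂) ≤ rho (Hu A ω₁) ∧ rho (Hu A ω₁) < 1 := by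
  obtain ⟨η, B, hB, hρB, hAeq⟩ := hA
  have hp0 : m - 1 ≠ 0 := by omega
  have hω1le : ω₁ ≤ 1 := le_of_lt (lt_of_lt_of_le hω12 hω2)
  have hω2pos : 0 < ω₂ := lt_trans hω1 hω12
  set Lm := Lmat A with hLm
  have hL0 : ∀ i j, 0 ≤ Lm i j := Lmat_nonneg hm hB hAeq
  have hF0 : TNonneg (Ftens A) := Ftens_nonneg hm hB hAeq hdiag
  -- geometric inverse facts
  have hNstrict : ∀ ω : ℝ, ∀ i j : Fin n, (i:ℕ) ≤ (j:ℕ) → (ω • Lm) i j = 0 := by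
    intro ω i j hij
    have hz : Lm i j = 0 := by
      rw [hLm]; unfold Lmat; rw [if_neg (by omega)]
    simp [Matrix.smul_apply, hz]
  have hQP : ∀ ω : ℝ, (1 - ω • Lm) * (∑ k ∈ Finset.range n, (ω • Lm) ^ k) = 1 ∧
      (∑ k ∈ Finset.range n, (ω • Lm) ^ k) * (1 - ω • Lm) = 1 := fun ω =>
    geom_inverse (ω • Lm) (strictLower_pow_n (ω • Lm) (hNstrict ω))
  set Qm : ℝ → Matrix (Fin n) (Fin n) ℝ :=
    fun ω => ∑ k ∈ Finset.range n, (ω • Lm) ^ k with hQm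
  have hQ0 : ∀ ω : ℝ, 0 ≤ ω → ∀ i j, 0 ≤ Qm ω i j := by
    intro ω hω i j
    have hNn : ∀ i j, 0 ≤ (ω • Lm) i j := by
      intro i j
      simp only [Matrix.smul_apply, smul_eq_mul]
      exact mul_nonneg hω (hL0 i j)
    rw [hQm]
    simp only
    rw [Matrix.sum_apply]
    exact Finset.sum_nonneg fun k _ => matpow_nonneg hNn k i j
  have hHu : ∀ ω : ℝ, Hu A ω = mmul (Qm ω) ((1 - ω) • idT m n + ω • Ftens A) := by
    intro ω
    rw [Hu, maj_denom hm, Matrix.inv_eq_right_inv (hQP ω).1]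
  have htmulHu : ∀ (ω : ℝ) (z : Fin n → ℝ) (i : Fin n), tmul (Hu A ω) z i
      = ∑ k, Qm ω i k * ((1-ω) * z k ^ (m-1) + ω * tmul (Ftens A) z k) := by
    intro ω z i
    rw [hHu ω, tmul_mmul]
    exact Finset.sum_congr rfl fun k _ => by rw [tmul_smul_add, tmul_idT hm]
  have hHuNN : ∀ ω : ℝ, 0 ≤ ω → ω ≤ 1 → TNonneg (Hu A ω) := by
    intro ω h0 h1 i f
    rw [hHu ω]
    refine Finset.sum_nonneg fun k _ => mul_nonneg (hQ0 ω h0 i k) ?_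
    have he : ((1 - ω) • idT m n + ω • Ftens A) k f
        = (1-ω) * idT m n k f + ω * Ftens A k f := by
      simp [Pi.add_apply, Pi.smul_apply, smul_eq_mul]
    rw [he]
    exact add_nonneg (mul_nonneg (by linarith) (idT_nonneg k f))
      (mul_nonneg h0 (hF0 k f))
  have hQPvec : ∀ (ω : ℝ) (u : Fin n → ℝ) (i : Fin n),
      ∑ k, Qm ω i k * (u k - ω * ∑ l, Lm k l * u l) = u i := by
    intro ω u i
    have h1 : ∀ k, ∑ l, (1 - ω • Lm) k l * u l = u k - ω * ∑ l, Lm k l * u l := by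
      intro k
      have he : ∀ l, (1 - ω • Lm) k l * u l
          = (if k = l then u l else 0) - ω * (Lm k l * u l) := by
        intro l
        simp only [Matrix.sub_apply, Matrix.smul_apply, Matrix.one_apply, smul_eq_mul]
        split <;> ring
      rw [Finset.sum_congr rfl fun l _ => he l, Finset.sum_sub_distrib,
        Finset.sum_ite_eq Finset.univ k u, if_pos (Finset.mem_univ k), ← Finset.mul_sum]
    calc ∑ k, Qm ω i k * (u k - ω * ∑ l, Lm k l * u l)
        = ∑ k, Qm ω i k * ∑ l, (1 - ω • Lm) k l * u l :=
          Finset.sum_congr rfl fun k _ => by rw [h1 k]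
      _ = ∑ l, (∑ k, Qm ω i k * (1 - ω • Lm) k l) * u l := by
          simp only [Finset.mul_sum, Finset.sum_mul]
          rw [Finset.sum_comm]
          exact Finset.sum_congr rfl fun l _ => Finset.sum_congr rfl fun k _ => by ring
      _ = ∑ l, (1 : Matrix (Fin n) (Fin n) ℝ) i l * u l := by
          refine Finset.sum_congr rfl fun l _ => ?_
          rw [← Matrix.mul_apply, (hQP ω).2]
      _ = u i := by
          have he : ∀ l, (1 : Matrix (Fin n) (Fin n) ℝ) i l * u l
              = if i = l then u l else 0 := by
            intro l
            simp only [Matrix.one_apply]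
            split <;> ring
          rw [Finset.sum_congr rfl fun l _ => he l,
            Finset.sum_ite_eq Finset.univ i u, if_pos (Finset.mem_univ i)]
  -- semipositivity
  obtain ⟨w, hw, hwB⟩ := semipos hm hn B hB hρB
  set y : Fin n → ℝ := fun i => w i ^ (m-1) with hy
  have hy0 : ∀ i, 0 < y i := fun i => pow_pos (hw i) _
  set cA : Fin n → ℝ := fun i => tmul A w i with hcA
  have hcApos : ∀ i, 0 < cA i := by
    intro i
    have h1 : tmul A w i = η * y i - tmul B w i := by
      rw [hAeq, tmul_smul_sub, tmul_idT hm]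
    have h2 := hwB i
    have : cA i = η * y i - tmul B w i := h1
    rw [this]
    have : tmul B w i < η * y i := h2
    linarith
  have hrel : ∀ k, cA k = y k - (∑ l, Lm k l * y l) - tmul (Ftens A) w k := by
    intro k
    have hA' : idT m n - Ltens A - Ftens A = A := sub_sub_cancel _ _
    calc cA k = tmul (idT m n - Ltens A - Ftens A) w k := by rw [hA']
      _ = tmul (idT m n) w k - tmul (Ltens A) w k - tmul (Ftens A) w k := by
          rw [tmul_sub, tmul_sub]
      _ = y k - (∑ l, Lm k l * y l) - tmul (Ftens A) w k := by
          rw [tmul_idT hm, Ltens, tmul_mmul]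
          congr 2
          exact Finset.sum_congr rfl fun l _ => by rw [tmul_idT hm]
  have hFw0 : ∀ k, 0 ≤ tmul (Ftens A) w k := fun k =>
    tmul_nonneg hF0 (fun i => le_of_lt (hw i)) k
  have hLy0 : ∀ k, 0 ≤ ∑ l, Lm k l * y l := fun k =>
    Finset.sum_nonneg fun l _ => mul_nonneg (hL0 k l) (le_of_lt (hy0 l))
  have hne : (Finset.univ : Finset (Fin n)).Nonempty := ⟨⟨0, by omega⟩, Finset.mem_univ _⟩
  set δ : ℝ := Finset.univ.inf' hne (fun i => cA i / y i) with hδ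
  have hδpos : 0 < δ :=
    (Finset.lt_inf'_iff hne).mpr fun i _ => div_pos (hcApos i) (hy0 i)
  have hδle : ∀ i, δ * y i ≤ cA i := by
    intro i
    have h : δ ≤ cA i / y i := Finset.inf'_le _ (Finset.mem_univ i)
    rw [le_div_iff₀ (hy0 i)] at h
    exact h
  have hδ1 : δ ≤ 1 := by
    set i0 : Fin n := ⟨0, by omega⟩
    have h : δ ≤ cA i0 / y i0 := Finset.inf'_le _ (Finset.mem_univ i0)
    have hle : cA i0 ≤ y i0 := by
      rw [hrel i0]
      linarith [hFw0 i0, hLy0 i0]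
    have h2 : cA i0 / y i0 ≤ 1 := (div_le_one (hy0 i0)).mpr hle
    exact le_trans h h2
  -- the SOR bound
  have hmain : ∀ ω : ℝ, 0 < ω → ω ≤ 1 → ∀ i,
      tmul (Hu A ω) w i ≤ (1 - ω * δ) * w i ^ (m-1) := by
    intro ω h0 h1 i
    have hcomp : ∀ k, (1-ω) * w k ^ (m-1) + ω * tmul (Ftens A) w k
        ≤ (1 - ω*δ) * (y k - ω * ∑ l, Lm k l * y l) := by
      intro k
      have hrw := hrel k
      have h2 : (1 - ω*δ) * (y k - ω * ∑ l, Lm k l * y l)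
          - ((1-ω) * y k + ω * tmul (Ftens A) w k)
          = ω * ((cA k - δ * y k) + ω * δ * (∑ l, Lm k l * y l)) := by
        rw [hrw]; ring
      have h3 : 0 ≤ (cA k - δ * y k) + ω * δ * (∑ l, Lm k l * y l) := by
        have ha := hδle k
        have hb : 0 ≤ ω * δ * (∑ l, Lm k l * y l) :=
          mul_nonneg (mul_nonneg h0.le hδpos.le) (hLy0 k)
        linarith
      have h4 : 0 ≤ ω * ((cA k - δ * y k) + ω * δ * (∑ l, Lm k l * y l)) :=
        mul_nonneg h0.le h3
      have h5 : (1-ω) * w k ^ (m-1) = (1-ω) * y k := rfl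
      linarith [h2 ▸ h4]
    rw [htmulHu]
    calc ∑ k, Qm ω i k * ((1-ω) * w k ^ (m-1) + ω * tmul (Ftens A) w k)
        ≤ ∑ k, Qm ω i k * ((1 - ω*δ) * (y k - ω * ∑ l, Lm k l * y l)) :=
          Finset.sum_le_sum fun k _ =>
            mul_le_mul_of_nonneg_left (hcomp k) (hQ0 ω h0.le i k)
      _ = (1 - ω*δ) * ∑ k, Qm ω i k * (y k - ω * ∑ l, Lm k l * y l) := by
          rw [Finset.mul_sum]
          exact Finset.sum_congr rfl fun k _ => by ring
      _ = (1 - ω*δ) * y i := by rw [hQPvec ω y i]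
  have hγ0 : ∀ ω : ℝ, 0 < ω → ω ≤ 1 → 0 ≤ 1 - ω * δ := by
    intro ω h0 h1
    have : ω * δ ≤ 1 := mul_le_one₀ h1 hδpos.le hδ1
    linarith
  have hrho : ∀ ω : ℝ, 0 < ω → ω ≤ 1 → rho (Hu A ω) ≤ 1 - ω * δ := fun ω h0 h1 =>
    rho_le hm hn (hHuNN ω h0.le h1) hw (hγ0 ω h0 h1) (hmain ω h0 h1)
  have hpart2 : rho (Hu A ω₁) < 1 := by
    have h1 := hrho ω₁ hω1 hω1le
    have h2 : 0 < ω₁ * δ := mul_pos hω1 hδpos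
    linarith
  refine ⟨?_, hpart2⟩
  refine Real.sSup_le ?_ (rho_nonneg _)
  rintro r ⟨lam, hEig, rfl⟩
  set t := ‖lam‖ with htdef
  have ht0 : 0 ≤ t := norm_nonneg _
  have ht1 : t ≤ 1 := by
    have h1 := eigen_abs_le hm hn (hHuNN ω₂ hω2pos.le hω2) hw (hmain ω₂ hω2pos hω2) hEig
    have h2 : 0 < ω₂ * δ := mul_pos hω2pos hδpos
    rw [← htdef] at h1
    linarith
  obtain ⟨xC, hxC0, hxCeq⟩ := hEig
  set Y : Fin n → ℂ := fun i => xC i ^ (m-1) with hY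
  set v : Fin n → ℝ := fun i => ‖xC i‖ with hv
  set u : Fin n → ℝ := fun i => v i ^ (m-1) with hu
  have huY : ∀ i, ‖Y i‖ = u i := fun i => by
    simp only [hY, hu, hv, norm_pow]
  have hv0 : ∀ i, 0 ≤ v i := fun i => norm_nonneg _
  have hu0 : ∀ i, 0 ≤ u i := fun i => pow_nonneg (hv0 i) _
  -- step 1: transformed eigen equation
  have hstep1 : ∀ j, (1-(ω₂:ℂ)) * Y j + (ω₂:ℂ) * tmulC (Ftens A) xC j
      = lam * (Y j - (ω₂:ℂ) * ∑ l, (Lm j l : ℂ) * Y l) := by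
    intro j
    set Z : Fin n → ℂ :=
      fun k => (1-(ω₂:ℂ)) * Y k + (ω₂:ℂ) * tmulC (Ftens A) xC k with hZ
    have hTk : ∀ k, tmulC ((1 - ω₂) • idT m n + ω₂ • Ftens A) xC k = Z k := by
      intro k
      rw [tmulC_smul_add, tmulC_idT hm, hZ]
      push_cast
      ring
    have hz1 : ∀ i, ∑ k, (Qm ω₂ i k : ℂ) * Z k = lam * Y i := by
      intro i
      calc ∑ k, (Qm ω₂ i k : ℂ) * Z k
          = tmulC (Hu A ω₂) xC i := by
            rw [hHu ω₂, tmulC_mmul]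
            exact Finset.sum_congr rfl fun k _ => by rw [hTk k]
        _ = lam * Y i := hxCeq i
    have hZj : ∑ k, (((1 : Matrix (Fin n) (Fin n) ℝ) j k : ℝ) : ℂ) * Z k = Z j := by
      have he : ∀ k, (((1 : Matrix (Fin n) (Fin n) ℝ) j k : ℝ) : ℂ) * Z k
          = if j = k then Z k else 0 := by
        intro k
        simp only [Matrix.one_apply]
        split <;> simp
      rw [Finset.sum_congr rfl fun k _ => he k,
        Finset.sum_ite_eq Finset.univ j Z, if_pos (Finset.mem_univ j)]
    calc (1-(ω₂:ℂ)) * Y j + (ω₂:ℂ) * tmulC (Ftens A) xC j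
        = Z j := rfl
      _ = ∑ k, (((1 : Matrix (Fin n) (Fin n) ℝ) j k : ℝ) : ℂ) * Z k := hZj.symm
      _ = ∑ k, ((((1 - ω₂ • Lm) * Qm ω₂) j k : ℝ) : ℂ) * Z k := by
          rw [(hQP ω₂).1]
      _ = ∑ k, ((∑ i, (1 - ω₂ • Lm) j i * Qm ω₂ i k : ℝ) : ℂ) * Z k := by
          refine Finset.sum_congr rfl fun k _ => by rw [Matrix.mul_apply]
      _ = ∑ i, ((1 - ω₂ • Lm) j i : ℂ) * (∑ k, (Qm ω₂ i k : ℂ) * Z k) := by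
          push_cast
          simp only [Finset.sum_mul, Finset.mul_sum]
          rw [Finset.sum_comm]
          exact Finset.sum_congr rfl fun i _ => Finset.sum_congr rfl fun k _ => by ring
      _ = ∑ i, ((1 - ω₂ • Lm) j i : ℂ) * (lam * Y i) := by
          exact Finset.sum_congr rfl fun i _ => by rw [hz1 i]
      _ = lam * (Y j - (ω₂:ℂ) * ∑ l, (Lm j l : ℂ) * Y l) := by
          have he : ∀ i, (((1 - ω₂ • Lm) j i : ℝ) : ℂ) * (lam * Y i)
              = (if j = i then lam * Y i else 0) - (ω₂:ℂ) * (Lm j i : ℂ) * (lam * Y i) := by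
            intro i
            simp only [Matrix.sub_apply, Matrix.smul_apply, Matrix.one_apply, smul_eq_mul]
            split <;> push_cast <;> ring
          rw [Finset.sum_congr rfl fun i _ => he i, Finset.sum_sub_distrib,
            Finset.sum_ite_eq Finset.univ j _, if_pos (Finset.mem_univ j)]
          have h2 : lam * ((ω₂:ℂ) * ∑ l, (Lm j l : ℂ) * Y l)
              = ∑ i, (ω₂:ℂ) * (Lm j i : ℂ) * (lam * Y i) := by
            rw [Finset.mul_sum, Finset.mul_sum]
            exact Finset.sum_congr rfl fun i _ => by ring
          rw [mul_sub, h2]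
  -- step 2: real inequality at ω₂
  have hstep2 : ∀ j, t * (u j - ω₂ * ∑ l, Lm j l * u l)
      ≤ (1-ω₂) * u j + ω₂ * tmul (Ftens A) v j := by
    intro j
    have hZabs : ‖(1-(ω₂:ℂ)) * Y j + (ω₂:ℂ) * tmulC (Ftens A) xC j‖
        ≤ (1-ω₂) * u j + ω₂ * tmul (Ftens A) v j := by
      refine (norm_add_le _ _).trans ?_
      rw [norm_mul, norm_mul]
      refine add_le_add ?_ ?_
      · rw [huY j]
        have he : ‖1-(ω₂:ℂ)‖ = 1-ω₂ := by
          rw [show (1-(ω₂:ℂ)) = ((1-ω₂ : ℝ) : ℂ) by push_cast; ring,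
            Complex.norm_of_nonneg (by linarith)]
        rw [he]
      · have h1 : ‖(ω₂:ℂ)‖ = ω₂ := by
          rw [Complex.norm_of_nonneg hω2pos.le]
        rw [h1]
        exact mul_le_mul_of_nonneg_left (abs_tmulC_le hF0 xC j) hω2pos.le
    have h2 : ‖(ω₂:ℂ) * ∑ l, (Lm j l : ℂ) * Y l‖
        ≤ ω₂ * ∑ l, Lm j l * u l := by
      rw [norm_mul, Complex.norm_of_nonneg hω2pos.le]
      refine mul_le_mul_of_nonneg_left ?_ hω2pos.le
      refine (norm_sum_le _ _).trans ?_
      refine Finset.sum_le_sum fun l _ => ?_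
      rw [norm_mul, Complex.norm_of_nonneg (hL0 j l), huY l]
    have h3 : u j - ‖(ω₂:ℂ) * ∑ l, (Lm j l : ℂ) * Y l‖
        ≤ ‖Y j - (ω₂:ℂ) * ∑ l, (Lm j l : ℂ) * Y l‖ := by
      rw [← huY j]
      rw [show ‖Y j‖ = ‖Y j‖ from rfl,
        show ‖(ω₂:ℂ) * ∑ l, (Lm j l : ℂ) * Y l‖
          = ‖(ω₂:ℂ) * ∑ l, (Lm j l : ℂ) * Y l‖ from rfl,
        show ‖Y j - (ω₂:ℂ) * ∑ l, (Lm j l : ℂ) * Y l‖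
          = ‖Y j - (ω₂:ℂ) * ∑ l, (Lm j l : ℂ) * Y l‖ from rfl]
      exact norm_sub_norm_le _ _
    have h4 : u j - ω₂ * ∑ l, Lm j l * u l
        ≤ ‖Y j - (ω₂:ℂ) * ∑ l, (Lm j l : ℂ) * Y l‖ := by linarith
    calc t * (u j - ω₂ * ∑ l, Lm j l * u l)
        ≤ t * ‖Y j - (ω₂:ℂ) * ∑ l, (Lm j l : ℂ) * Y l‖ :=
          mul_le_mul_of_nonneg_left h4 ht0
      _ = ‖lam * (Y j - (ω₂:ℂ) * ∑ l, (Lm j l : ℂ) * Y l)‖ := by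
          rw [norm_mul, htdef]
      _ = ‖(1-(ω₂:ℂ)) * Y j + (ω₂:ℂ) * tmulC (Ftens A) xC j‖ := by
          rw [hstep1 j]
      _ ≤ (1-ω₂) * u j + ω₂ * tmul (Ftens A) v j := hZabs
  -- step 3: shift to ω₁
  have hstep3 : ∀ j, t * (u j - ω₁ * ∑ l, Lm j l * u l)
      ≤ (1-ω₁) * u j + ω₁ * tmul (Ftens A) v j := by
    intro j
    have h2 := hstep2 j
    have ha : 0 ≤ u j := hu0 j
    have hb : 0 ≤ ∑ l, Lm j l * u l :=
      Finset.sum_nonneg fun l _ => mul_nonneg (hL0 j l) (hu0 l)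
    have hcF : 0 ≤ tmul (Ftens A) v j := tmul_nonneg hF0 hv0 j
    rcases le_or_gt 0 (tmul (Ftens A) v j + t * (∑ l, Lm j l * u l) - u j) with hD | hD
    · nlinarith [mul_nonneg (sub_nonneg.mpr ht1) ha, mul_nonneg hω1.le hD]
    · have hkey : 0 ≤ (ω₂ - ω₁) *
          (u j - tmul (Ftens A) v j - t * (∑ l, Lm j l * u l)) :=
        mul_nonneg (by linarith) (by linarith)
      nlinarith [hkey]
  -- step 4: multiply by Q₁
  have hstep4 : ∀ i, t * u i ≤ tmul (Hu A ω₁) v i := by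
    intro i
    have hQPu := hQPvec ω₁ u i
    calc t * u i
        = t * ∑ k, Qm ω₁ i k * (u k - ω₁ * ∑ l, Lm k l * u l) := by rw [hQPu]
      _ = ∑ k, Qm ω₁ i k * (t * (u k - ω₁ * ∑ l, Lm k l * u l)) := by
          rw [Finset.mul_sum]
          exact Finset.sum_congr rfl fun k _ => by ring
      _ ≤ ∑ k, Qm ω₁ i k * ((1-ω₁) * u k + ω₁ * tmul (Ftens A) v k) :=
          Finset.sum_le_sum fun k _ =>
            mul_le_mul_of_nonneg_left (hstep3 k) (hQ0 ω₁ hω1.le i k)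
      _ = tmul (Hu A ω₁) v i := by
          rw [htmulHu ω₁ v i]
  -- conclude
  have hvne : ∃ i, 0 < v i := by
    obtain ⟨i, hi⟩ := Function.ne_iff.mp hxC0
    exact ⟨i, norm_pos_iff.mpr hi⟩
  exact rho_ge_of_subinv hm hn (Hu A ω₁) (hHuNN ω₁ hω1.le hω1le) hv0 hvne ht0 hstep4

end

end MultilinearPaper
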